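/- arXiv:2406.18101 — 4 statements merged into one kernel-verified Lean document; each statement's English description precedes it below -/
import Mathlib

section
/- Let functions of x and discrete n, m satisfy the three relations of Proposition 2.1: S^{(i,j)}_x = S^{(i,j+1)} + S^{(i+1,j)} - S^{(0,j)}S^{(i,0)}, p·S̃^{(i,j)} = S̃^{(i,j+1)} + p·S^{(i,j)} + S^{(i+1,j)} - S̃^{(i,0)}S^{(0,j)}, and q·Ŝ^{(i,j)} = Ŝ^{(i,j+1)} + q·S^{(i,j)} + S^{(i+1,j)} - Ŝ^{(i,0)}S^{(0,j)} for all integers i, j. Then u := S^{(0,0)} satisfies the D∆²pKP equation ∂_x(û - ũ) = (p - q + û - ũ)(u + û̃ - û - ũ). -/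
/-- From the three relations of Proposition 2.1, `u = S⁽⁰⁰⁾` satisfies the
D∆²pKP equation `∂ₓ(û - ũ) = (p - q + û - ũ)(u + û̃ - û - ũ)`. -/
theorem DDpKP_from_S_relations (S : ℤ → ℤ → ℝ → ℤ → ℤ → ℂ) (p q : ℂ)
    (hx : ∀ i j x n m, HasDerivAt (fun t => S i j t n m)
      (S i (j + 1) x n m + S (i + 1) j x n m - S 0 j x n m * S i 0 x n m) x)
    (hn : ∀ i j x n m, p * S i j x (n + 1) m =
      S i (j + 1) x (n + 1) m + p * S i j x n m + S (i + 1) j x n m -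
        S i 0 x (n + 1) m * S 0 j x n m)
    (hm : ∀ i j x n m, q * S i j x n (m + 1) =
      S i (j + 1) x n (m + 1) + q * S i j x n m + S (i + 1) j x n m -
        S i 0 x n (m + 1) * S 0 j x n m) :
    ∀ x n m, HasDerivAt (fun t => S 0 0 t n (m + 1) - S 0 0 t (n + 1) m)
      ((p - q + S 0 0 x n (m + 1) - S 0 0 x (n + 1) m) *
        (S 0 0 x n m + S 0 0 x (n + 1) (m + 1) - S 0 0 x n (m + 1) -
          S 0 0 x (n + 1) m)) x := by
  intro x n m
  have hx₀ := fun n m => hx 0 0 x n m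
  have hn₀ := fun n m => hn 0 0 x n m
  have hm₀ := fun n m => hm 0 0 x n m
  simp only [zero_add] at hx₀ hn₀ hm₀
  set u := S 0 0 x n m
  set uₙ := S 0 0 x (n + 1) m
  set uₘ := S 0 0 x n (m + 1)
  set uₙₘ := S 0 0 x (n + 1) (m + 1)
  have shift_S01 : S 0 1 x n (m + 1) - S 0 1 x (n + 1) m =
      q * (uₘ - u) - p * (uₙ - u) + u * (uₘ - uₙ) := by
    linear_combination hn₀ n m - hm₀ n m
  -- eliminating the doubly shifted `S⁽⁰¹⁾` is what produces the factor `u + uₙₘ - uₘ - uₙ`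
  have shift_S10 : S 1 0 x n (m + 1) - S 1 0 x (n + 1) m =
      (p - q) * uₙₘ - p * uₘ + q * uₙ + uₙₘ * (uₘ - uₙ) := by
    linear_combination hm₀ (n + 1) m - hn₀ n (m + 1)
  refine ((hx₀ n (m + 1)).sub (hx₀ (n + 1) m)).congr_deriv ?_
  linear_combination shift_S01 + shift_S10
end

section
/- Assume the relations of Proposition 2.1 hold for all i, j ∈ ℤ. Then v := 1 - S^{(-1,0)} satisfies the D∆²pmKP equation (p·v̂ - q·ṽ)/v̂̃ - (ṽ_x + p·v)/ṽ + (v̂_x + q·v)/v̂ = 0, provided ṽ, v̂, v̂̃ are nonvanishing. -/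
/-!
Write `w = S⁽⁰'⁰⁾`. The `(i, j) = (-1, 0)` instances of the relations factor each numerator of the
equation through its denominator:
`ṽ_x + p v = ṽ (p + w - w̃)`, `v̂_x + q v = v̂ (q + w - ŵ)` and `p v̂ - q ṽ = v̂̃ (p - q + ŵ - w̃)`.
After cancelling, the three remaining linear expressions in `w` sum to zero.
-/

/-- `s` and `s'` are `S` at a lattice point and at its shift in one lattice direction with
parameter `p`; this serves for both the `n`- and the `m`-direction. -/
theorem deriv_one_sub_add_mul_eq {s s' : ℤ → ℤ → ℝ → ℂ} {p : ℂ} {x : ℝ}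
    (hderiv : HasDerivAt (s' (-1) 0) (s' (-1) 1 x + s' 0 0 x - s' 0 0 x * s' (-1) 0 x) x)
    (hshift : p * s' (-1) 0 x =
      s' (-1) 1 x + p * s (-1) 0 x + s 0 0 x - s' (-1) 0 x * s 0 0 x) :
    deriv (fun t => 1 - s' (-1) 0 t) x + p * (1 - s (-1) 0 x) =
      (1 - s' (-1) 0 x) * (p + s 0 0 x - s' 0 0 x) := by
  rw [(hderiv.const_sub 1).deriv]
  linear_combination hshift

theorem mixed_shift_identity {S : ℤ → ℤ → ℝ → ℤ → ℤ → ℂ} {p q : ℂ}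
    (hn : ∀ i j x n m, p * S i j x (n + 1) m =
      S i (j + 1) x (n + 1) m + p * S i j x n m + S (i + 1) j x n m -
        S i 0 x (n + 1) m * S 0 j x n m)
    (hm : ∀ i j x n m, q * S i j x n (m + 1) =
      S i (j + 1) x n (m + 1) + q * S i j x n m + S (i + 1) j x n m -
        S i 0 x n (m + 1) * S 0 j x n m)
    (x : ℝ) (n m : ℤ) :
    p * (1 - S (-1) 0 x n (m + 1)) - q * (1 - S (-1) 0 x (n + 1) m) =
      (1 - S (-1) 0 x (n + 1) (m + 1)) * (p - q + S 0 0 x n (m + 1) - S 0 0 x (n + 1) m) := by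
  have hn' := hn (-1) 0 x n (m + 1)
  have hm' := hm (-1) 0 x (n + 1) m
  simp only [neg_add_cancel, zero_add] at hn' hm'
  linear_combination hn' - hm'

/-- From the relations of Proposition 2.1, `v = 1 - S⁽⁻¹'⁰⁾` satisfies the
D∆²pmKP equation `(p v̂ - q ṽ)/v̂̃ - (ṽ_x + p v)/ṽ + (v̂_x + q v)/v̂ = 0`. -/
theorem DDpmKP_from_S_relations (S : ℤ → ℤ → ℝ → ℤ → ℤ → ℂ) (p q : ℂ)
    (hx : ∀ i j x n m, HasDerivAt (fun t => S i j t n m)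
      (S i (j + 1) x n m + S (i + 1) j x n m - S 0 j x n m * S i 0 x n m) x)
    (hn : ∀ i j x n m, p * S i j x (n + 1) m =
      S i (j + 1) x (n + 1) m + p * S i j x n m + S (i + 1) j x n m -
        S i 0 x (n + 1) m * S 0 j x n m)
    (hm : ∀ i j x n m, q * S i j x n (m + 1) =
      S i (j + 1) x n (m + 1) + q * S i j x n m + S (i + 1) j x n m -
        S i 0 x n (m + 1) * S 0 j x n m)
    (v : ℝ → ℤ → ℤ → ℂ)
    (hv : ∀ x n m, v x n m = 1 - S (-1) 0 x n m)
    (hne : ∀ x n m, v x n m ≠ 0) :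
    ∀ x n m,
      (p * v x n (m + 1) - q * v x (n + 1) m) / v x (n + 1) (m + 1) -
        (deriv (fun t => v t (n + 1) m) x + p * v x n m) / v x (n + 1) m +
        (deriv (fun t => v t n (m + 1)) x + q * v x n m) / v x n (m + 1) = 0 := by
  intro x n m
  have hne' : ∀ n m, 1 - S (-1) 0 x n m ≠ 0 := fun n m => hv x n m ▸ hne x n m
  simp only [hv]
  rw [mixed_shift_identity hn hm,
    deriv_one_sub_add_mul_eq (s := fun i j t => S i j t n m)
      (s' := fun i j t => S i j t (n + 1) m) (hx (-1) 0 x (n + 1) m)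
      (hn (-1) 0 x n m),
    deriv_one_sub_add_mul_eq (s := fun i j t => S i j t n m)
      (s' := fun i j t => S i j t n (m + 1)) (hx (-1) 0 x n (m + 1))
      (hm (-1) 0 x n m),
    mul_div_cancel_left₀ _ (hne' _ _), mul_div_cancel_left₀ _ (hne' _ _),
    mul_div_cancel_left₀ _ (hne' _ _)]
  ring
end

section
/- Suppose M̃ = M + r·s̃ᵀ with r̃ = (pI+K)·r, sᵀ = s̃ᵀ·(pI-L), and I+M, I+M̃ invertible, and define τ = det(I+M), Y(a) = 1 - sᵀ(aI+L)⁻¹(I+M)⁻¹r. Then τ̃/τ = Y(-p), i.e. det(I+M̃)/det(I+M) = 1 - sᵀ(L - pI)⁻¹(I+M)⁻¹r, provided pI - L is invertible. -/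
/-!
Since `sᵀ = s̃ᵀ(pI - L)`, the row vector `sᵀ(L - pI)⁻¹` is `-s̃ᵀ`, so the right-hand side equals
`1 + s̃ᵀ(I + M)⁻¹r`, which is `det(I + M + r s̃ᵀ) / det(I + M)` by the matrix determinant lemma.
-/

namespace Matrix

variable {n α : Type*} [Fintype n] [DecidableEq n] [CommRing α]

theorem inv_neg (A : Matrix n n α) : (-A)⁻¹ = -A⁻¹ := by
  by_cases hA : IsUnit A.det
  · exact inv_eq_left_inv (by rw [neg_mul_neg, nonsing_inv_mul _ hA])
  · have hnA : ¬IsUnit (-A).det := by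
      rwa [det_neg, (isUnit_neg_one.pow _).mul_left_iff]
    rw [nonsing_inv_apply_not_isUnit _ hA, nonsing_inv_apply_not_isUnit _ hnA, neg_zero]

theorem det_one_add_vecMulVec (u v : n → α) : (1 + vecMulVec u v).det = 1 + v ⬝ᵥ u := by
  rw [vecMulVec_eq Unit, det_one_add_replicateCol_mul_replicateRow]

theorem det_add_vecMulVec {A : Matrix n n α} (hA : IsUnit A.det) (u v : n → α) :
    (A + vecMulVec u v).det = A.det * (1 + v ᵥ* A⁻¹ ⬝ᵥ u) := by
  have hfactor : A + vecMulVec u v = A * (1 + vecMulVec (A⁻¹ *ᵥ u) v) := by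
    rw [mul_add, mul_one, mul_vecMulVec, mulVec_mulVec, mul_nonsing_inv _ hA, one_mulVec]
  rw [hfactor, det_mul, det_one_add_vecMulVec, dotProduct_mulVec]

theorem vecMul_vecMul_neg_inv {P : Matrix n n α} (hP : IsUnit P.det) (v : n → α) :
    v ᵥ* P ᵥ* (-P)⁻¹ = -v := by
  rw [inv_neg, vecMul_neg, vecMul_vecMul, mul_nonsing_inv _ hP, vecMul_one]

end Matrix

open Matrix

theorem tau_quotient_general {N : ℕ} (L M Mt : Matrix (Fin N) (Fin N) ℂ)
    (r s st : Fin N → ℂ) (p : ℂ)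
    (hM : Mt = M + Matrix.vecMulVec r st)
    (hs : Matrix.vecMul st (p • (1 : Matrix (Fin N) (Fin N) ℂ) - L) = s)
    (hinv : IsUnit (1 + M))
    (hpL : IsUnit (p • (1 : Matrix (Fin N) (Fin N) ℂ) - L)) :
    (1 + Mt).det / (1 + M).det =
      1 - dotProduct
        (Matrix.vecMul s ((L - p • (1 : Matrix (Fin N) (Fin N) ℂ))⁻¹ * (1 + M)⁻¹)) r := by
  have hdet : IsUnit (1 + M).det := (isUnit_iff_isUnit_det _).mp hinv
  have hst : s ᵥ* (L - p • 1)⁻¹ = -st := by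
    rw [← hs, ← neg_sub (p • 1) L]
    exact vecMul_vecMul_neg_inv ((isUnit_iff_isUnit_det _).mp hpL) st
  rw [hM, ← add_assoc, det_add_vecMulVec hdet, mul_div_cancel_left₀ _ hdet.ne_zero,
    ← vecMul_vecMul, hst, neg_vecMul, neg_dotProduct, sub_neg_eq_add]

/-- The τ-function quotient: `det(I+M̃)/det(I+M) = 1 - sᵀ(L - pI)⁻¹(I+M)⁻¹ r`. -/
theorem tau_quotient {N : ℕ} (K L M Mt : Matrix (Fin N) (Fin N) ℂ)
    (r s st : Fin N → ℂ) (p : ℂ)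
    (hM : Mt = M + Matrix.vecMulVec r st)
    (hs : Matrix.vecMul st (p • (1 : Matrix (Fin N) (Fin N) ℂ) - L) = s)
    (hinv : IsUnit (1 + M))
    (hpL : IsUnit (p • (1 : Matrix (Fin N) (Fin N) ℂ) - L)) :
    (1 + Mt).det / (1 + M).det =
      1 - dotProduct
        (Matrix.vecMul s ((L - p • (1 : Matrix (Fin N) (Fin N) ℂ))⁻¹ * (1 + M)⁻¹)) r :=
  tau_quotient_general L M Mt r s st p hM hs hinv hpL
end

section
/- Let N = 1, K = (k), L = (l) with k + l ≠ 0, and r = ρ, s = σ with ρ(x,n,m) = (p+k)ⁿ(q+k)ᵐ e^{kx}, σ(x,n,m) = (p-l)^{-n}(q-l)^{-m} e^{lx}, M = ρσ/(k+l), assuming 1 + M ≠ 0 everywhere. Then u = S^{(0,0)} = ρσ/(1 + ρσ/(k+l)) satisfies the D∆²pKP equation ∂_x(û - ũ) = (p - q + û - ũ)(u + û̃ - û - ũ) (one-soliton solution). -/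
/-!
With `a = (p+k)/(p-l)` and `b = (q+k)/(q-l)` the product `E = ρσ` equals `aⁿ bᵐ e^{(k+l)x}`, so
`∂ₓE = (k+l)E` and the shifts `n ↦ n+1`, `m ↦ m+1` multiply `E` by `a` and `b`. Hence
`u = E/(1 + E/(k+l))` obeys the logistic equation `∂ₓu = u(k+l-u)`, and the D∆²pKP equation
reduces to a rational identity in `E`, checked by clearing denominators.
-/

open Complex

def solitonProfile {K : Type*} [Field K] (κ S : K) : K := S / (1 + S / κ)

section Field

variable {K : Type*} [Field K] {κ : K}

theorem solitonProfile_eq_mul_div (hκ : κ ≠ 0) (S : K) :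
    solitonProfile κ S = κ * S / (κ + S) := by
  rw [solitonProfile, one_add_div hκ, div_div_eq_mul_div, mul_comm, add_comm]

theorem solitonProfile_div_mul (hκ : κ ≠ 0) {P D : K} (hD : D ≠ 0) (S : K) :
    solitonProfile κ (P / D * S) = κ * (P * S) / (κ * D + P * S) := by
  rw [solitonProfile_eq_mul_div hκ]
  field_simp

theorem add_ne_zero_of_one_add_div_ne_zero (hκ : κ ≠ 0) {S : K} (h : 1 + S / κ ≠ 0) :
    κ + S ≠ 0 :=
  (div_ne_zero_iff.mp (one_add_div hκ ▸ h)).1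

theorem mul_add_mul_ne_zero_of_one_add_div_ne_zero (hκ : κ ≠ 0) {P D S : K} (hD : D ≠ 0)
    (h : 1 + P / D * S / κ ≠ 0) : κ * D + P * S ≠ 0 := by
  have : κ * D + P * S = D * (κ + P / D * S) := by field_simp
  exact this ▸ mul_ne_zero hD (add_ne_zero_of_one_add_div_ne_zero hκ h)

theorem dpKP_one_soliton_rational_identity {p q k l T : K} (h0 : k + l + T ≠ 0)
    (ha : (k + l) * (p - l) + (p + k) * T ≠ 0) (hb : (k + l) * (q - l) + (q + k) * T ≠ 0)
    (hab : (k + l) * ((p - l) * (q - l)) + (p + k) * (q + k) * T ≠ 0) :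
    (k + l) * ((q + k) * T) / ((k + l) * (q - l) + (q + k) * T) *
        (k + l - (k + l) * ((q + k) * T) / ((k + l) * (q - l) + (q + k) * T)) -
      (k + l) * ((p + k) * T) / ((k + l) * (p - l) + (p + k) * T) *
        (k + l - (k + l) * ((p + k) * T) / ((k + l) * (p - l) + (p + k) * T)) =
    (p - q + (k + l) * ((q + k) * T) / ((k + l) * (q - l) + (q + k) * T) -
        (k + l) * ((p + k) * T) / ((k + l) * (p - l) + (p + k) * T)) *
      ((k + l) * T / (k + l + T) +
        (k + l) * ((p + k) * (q + k) * T) /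
          ((k + l) * ((p - l) * (q - l)) + (p + k) * (q + k) * T) -
        (k + l) * ((q + k) * T) / ((k + l) * (q - l) + (q + k) * T) -
        (k + l) * ((p + k) * T) / ((k + l) * (p - l) + (p + k) * T)) := by
  -- atomic denominators keep `field_simp` from expanding them before cross-multiplying
  generalize hD0 : k + l + T = D0 at *
  generalize hDa : (k + l) * (p - l) + (p + k) * T = Da at *
  generalize hDb : (k + l) * (q - l) + (q + k) * T = Db at *
  generalize hDab : (k + l) * ((p - l) * (q - l)) + (p + k) * (q + k) * T = Dab at *
  field_simp
  subst hD0 hDa hDb hDab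
  ring

theorem solitonProfile_dpKP {p q k l T : K} (hpl : p - l ≠ 0) (hql : q - l ≠ 0)
    (hkl : k + l ≠ 0) (h0 : 1 + T / (k + l) ≠ 0)
    (ha : 1 + (p + k) / (p - l) * T / (k + l) ≠ 0)
    (hb : 1 + (q + k) / (q - l) * T / (k + l) ≠ 0)
    (hab : 1 + (p + k) / (p - l) * ((q + k) / (q - l) * T) / (k + l) ≠ 0) :
    let F := solitonProfile (k + l)
    let a := (p + k) / (p - l)
    let b := (q + k) / (q - l)
    F (b * T) * (k + l - F (b * T)) - F (a * T) * (k + l - F (a * T)) =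
      (p - q + F (b * T) - F (a * T)) * (F T + F (a * (b * T)) - F (b * T) - F (a * T)) := by
  intro F a b
  have hpqll := mul_ne_zero hpl hql
  rw [← mul_assoc, div_mul_div_comm] at hab ⊢
  simp only [F, a, b, solitonProfile_div_mul hkl hpl, solitonProfile_div_mul hkl hql,
    solitonProfile_div_mul hkl hpqll, solitonProfile_eq_mul_div hkl T]
  exact dpKP_one_soliton_rational_identity (add_ne_zero_of_one_add_div_ne_zero hkl h0)
    (mul_add_mul_ne_zero_of_one_add_div_ne_zero hkl hpl ha)
    (mul_add_mul_ne_zero_of_one_add_div_ne_zero hkl hql hb)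
    (mul_add_mul_ne_zero_of_one_add_div_ne_zero hkl hpqll hab)

end Field

theorem HasDerivAt.solitonProfile {𝕜 𝕜' : Type*} [NontriviallyNormedField 𝕜]
    [NontriviallyNormedField 𝕜'] [NormedAlgebra 𝕜 𝕜'] {f : 𝕜 → 𝕜'} {κ : 𝕜'} {x : 𝕜}
    (hf : HasDerivAt f (κ * f x) x) (hκ : κ ≠ 0) (h : 1 + f x / κ ≠ 0) :
    HasDerivAt (fun t => solitonProfile κ (f t))
      (solitonProfile κ (f x) * (κ - solitonProfile κ (f x))) x := by
  have := add_ne_zero_of_one_add_div_ne_zero hκ h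
  refine (hf.div ((hf.div_const κ).const_add 1) h).congr_deriv ?_
  simp only [_root_.solitonProfile]
  field_simp

theorem hasDerivAt_const_mul_cexp (c k : ℂ) (x : ℝ) :
    HasDerivAt (fun t : ℝ => c * exp (k * t)) (k * (c * exp (k * x))) x := by
  have := ((ofRealCLM.hasDerivAt (x := x)).const_mul k).cexp.const_mul c
  simpa [mul_comm, mul_left_comm] using this

/-- One-soliton solution of the D∆²pKP equation: with
`ρ = (p+k)ⁿ(q+k)ᵐ e^{kx}`, `σ = (p-l)⁻ⁿ(q-l)⁻ᵐ e^{lx}`, `M = ρσ/(k+l)`,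
the function `u = ρσ/(1 + ρσ/(k+l))` satisfies
`∂ₓ(û - ũ) = (p - q + û - ũ)(u + û̃ - û - ũ)`. -/
theorem one_soliton_DDpKP (p q k l : ℂ)
    (hpk : p + k ≠ 0) (hqk : q + k ≠ 0) (hpl : p - l ≠ 0) (hql : q - l ≠ 0)
    (hkl : k + l ≠ 0)
    (ρ σM : ℝ → ℤ → ℤ → ℂ)
    (hρ : ∀ x n m, ρ x n m = (p + k) ^ n * (q + k) ^ m * Complex.exp (k * x))
    (hσ : ∀ x n m, σM x n m = (p - l) ^ (-n) * (q - l) ^ (-m) * Complex.exp (l * x))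
    (hM : ∀ x n m, 1 + ρ x n m * σM x n m / (k + l) ≠ 0)
    (u : ℝ → ℤ → ℤ → ℂ)
    (hu : ∀ x n m, u x n m =
      ρ x n m * σM x n m / (1 + ρ x n m * σM x n m / (k + l))) :
    ∀ x n m, HasDerivAt (fun t => u t n (m + 1) - u t (n + 1) m)
      ((p - q + u x n (m + 1) - u x (n + 1) m) *
        (u x n m + u x (n + 1) (m + 1) - u x n (m + 1) - u x (n + 1) m)) x := by
  intro x n m
  have hρσ : ∀ t n m, ρ t n m * σM t n m =
      ((p + k) / (p - l)) ^ n * ((q + k) / (q - l)) ^ m * exp ((k + l) * t) := by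
    intro t n m
    rw [hρ, hσ, div_zpow, div_zpow, zpow_neg, zpow_neg, add_mul, exp_add]
    ring
  have hderiv : ∀ n m, HasDerivAt (fun t => u t n m) (u x n m * (k + l - u x n m)) x := by
    intro n m
    simp only [hu, hρσ] at hM ⊢
    exact (hasDerivAt_const_mul_cexp _ _ x).solitonProfile hkl (hM x n m)
  have hshift_n : ∀ n m, ρ x (n + 1) m * σM x (n + 1) m =
      (p + k) / (p - l) * (ρ x n m * σM x n m) := fun n m => by
    rw [hρσ, hρσ, zpow_add_one₀ (div_ne_zero hpk hpl)]; ring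
  have hshift_m : ∀ n m, ρ x n (m + 1) * σM x n (m + 1) =
      (q + k) / (q - l) * (ρ x n m * σM x n m) := fun n m => by
    rw [hρσ, hρσ, zpow_add_one₀ (div_ne_zero hqk hql)]; ring
  refine ((hderiv n (m + 1)).sub (hderiv (n + 1) m)).congr_deriv ?_
  simp only [hu, hshift_n, hshift_m]
  exact solitonProfile_dpKP hpl hql hkl (hM x n m)
    (by simpa only [hshift_n] using hM x (n + 1) m)
    (by simpa only [hshift_m] using hM x n (m + 1))
    (by simpa only [hshift_n, hshift_m] using hM x (n + 1) (m + 1))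
end
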